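/- Under the same compact-support hypothesis, the quantity Σ_{n∈ℤ} [b(n,t)² + 2a(n,t)² − 1/2] is conserved for the Toda lattice in Flaschka variables. -/

import Mathlib

/-!
The energy density `b n ^ 2 + 2 * a n ^ 2 - 1/2` satisfies a discrete conservation law: along
the Flaschka flow its time derivative is `4 * (J (n + 1) - J n)` for the current
`J n = a (n - 1) ^ 2 * b n`. Both the density and the current vanish off a fixed finite window,
so the series is a finite sum that may be differentiated termwise, and the sum of the discrete
divergence telescopes to zero.
-/

open Finset

theorem tsum_add_one_sub_eq_zero {E : Type*} [AddCommGroup E] [TopologicalSpace E]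
    [IsTopologicalAddGroup E] [T2Space E] {g : ℤ → E} (hg : (Function.support g).Finite) :
    ∑' n, (g (n + 1) - g n) = 0 := by
  have hsum : Summable g := summable_of_hasFiniteSupport hg
  have hshift : Summable fun n => g (n + 1) := (Equiv.addRight 1).summable_iff.mpr hsum
  rw [hshift.tsum_sub hsum]
  exact sub_eq_zero.2 ((Equiv.addRight 1).tsum_eq g)

theorem hasDerivAt_tsum_of_forall_notMem {ι 𝕜 E : Type*} [NontriviallyNormedField 𝕜]
    [NormedAddCommGroup E] [NormedSpace 𝕜 E] {f : ι → 𝕜 → E} {f' : ι → E} {t : 𝕜}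
    (S : Finset ι) (hS : ∀ n ∉ S, ∀ s, f n s = 0) (hf : ∀ n, HasDerivAt (f n) (f' n) t) :
    HasDerivAt (fun s => ∑' n, f n s) (∑' n, f' n) t := by
  have hf' : ∀ n ∉ S, f' n = 0 := fun n hn =>
    (hf n).unique (by simpa [funext (hS n hn)] using hasDerivAt_const t (0 : E))
  have hfin : (fun s => ∑' n, f n s) = fun s => ∑ n ∈ S, f n s :=
    funext fun s => tsum_eq_sum fun n hn => hS n hn s
  rw [tsum_eq_sum hf', hfin]
  exact HasDerivAt.fun_sum fun n _ => hf n

def todaEnergyCurrent (a b : ℤ → ℝ → ℝ) (t : ℝ) (n : ℤ) : ℝ :=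
  a (n - 1) t ^ 2 * b n t

theorem hasDerivAt_todaEnergyDensity {a b : ℤ → ℝ → ℝ}
    (hb : ∀ n t, HasDerivAt (b n) (2 * ((a n t)^2 - (a (n - 1) t)^2)) t)
    (ha : ∀ n t, HasDerivAt (a n) (a n t * (b (n + 1) t - b n t)) t) (n : ℤ) (t : ℝ) :
    HasDerivAt (fun s => (b n s)^2 + 2 * (a n s)^2 - 1/2)
      (4 * (todaEnergyCurrent a b t (n + 1) - todaEnergyCurrent a b t n)) t := by
  have hb2 := (hb n t).fun_pow 2
  have ha2 := ((ha n t).fun_pow 2).const_mul 2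
  refine ((hb2.add ha2).sub_const (1/2)).congr_deriv ?_
  simp only [todaEnergyCurrent, add_sub_cancel_right]
  push_cast
  ring

/-- For the Toda lattice in Flaschka variables with `a(n,t) = 1/2`, `b(n,t) = 0`
for `|n| ≥ M`, the quantity `Σ_n [b(n,t)² + 2a(n,t)² − 1/2]` is conserved. -/
theorem flaschka_energy_conserved
    (a b : ℤ → ℝ → ℝ)
    (hb : ∀ n t, HasDerivAt (b n) (2 * ((a n t)^2 - (a (n - 1) t)^2)) t)
    (ha : ∀ n t, HasDerivAt (a n) (a n t * (b (n + 1) t - b n t)) t)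
    (M : ℤ)
    (hsupp : ∀ (t : ℝ) (n : ℤ), M ≤ |n| → a n t = 1/2 ∧ b n t = 0) :
    ∀ t : ℝ,
      HasDerivAt (fun s : ℝ => ∑' n : ℤ, ((b n s)^2 + 2 * (a n s)^2 - 1/2)) 0 t := by
  intro t
  have hfar : ∀ n ∉ Ioo (-M) M, M ≤ |n| := fun n hn =>
    not_lt.1 fun h => hn (mem_Ioo.2 (abs_lt.1 h))
  have hdensity : ∀ n ∉ Ioo (-M) M, ∀ s, (b n s)^2 + 2 * (a n s)^2 - 1/2 = 0 := by
    intro n hn s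
    obtain ⟨han, hbn⟩ := hsupp s n (hfar n hn)
    rw [han, hbn]
    norm_num
  have hcurrent : (Function.support (todaEnergyCurrent a b t)).Finite :=
    (Ioo (-M) M).finite_toSet.subset fun n hn => by
      by_contra hn'
      exact hn (by simp [todaEnergyCurrent, (hsupp t n (hfar n hn')).2])
  have hderiv :=
    hasDerivAt_tsum_of_forall_notMem _ hdensity (hasDerivAt_todaEnergyDensity hb ha · t)
  rwa [tsum_mul_left, tsum_add_one_sub_eq_zero hcurrent, mul_zero] at hderiv
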